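/- Let n > k be positive integers, let v^n be the Galerkin approximation of order n, and define φ(t) = Σ_{i=1}^k λ_i² v^n_i(t)², ρ(t) = Σ_{i=k+1}^n λ_i² v^n_i(t)², and F(t) = Σ_{i=k+1}^n (v^n_i)'(t)² + M(φ(t) + ρ(t)) − M(φ(t)). Then F(t) ≤ F(0)·exp(L H₀ λ_k t / ν₁²) for every t ≥ 0, where H₀ = Σ_i b_i² + M(Σ_i λ_i² a_i²). -/

import Mathlib

open Filter Set

/-- Derivative from within the half line `[0, ∞)`. -/
noncomputable def derIci (f : ℝ → ℝ) : ℝ → ℝ := derivWithin f (Set.Ici (0 : ℝ))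

/-- The pair `(a, b)` belongs to the energy space `D(A^{1/2}) × H`. -/
def InEnergy (lam a b : ℕ → ℝ) : Prop :=
  Summable fun i => (b i) ^ 2 + (lam i) ^ 2 * (a i) ^ 2

/-- `R_k(a,b) = Σ_{i>k} (b_i² + λ_i² a_i²)`. -/
noncomputable def Rk (lam a b : ℕ → ℝ) (k : ℕ) : ℝ :=
  ∑' i : ℕ, if k < i then (b i) ^ 2 + (lam i) ^ 2 * (a i) ^ 2 else 0

/-- Lacunary (spectral gap) data: `R_k(a,b)·k²·exp(k λ_k) ≤ 1` for infinitely many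
positive integers `k`. -/
def Lacunary (lam a b : ℕ → ℝ) : Prop :=
  InEnergy lam a b ∧
    {k : ℕ | 0 < k ∧
      Rk lam a b k * (k : ℝ) ^ 2 * Real.exp ((k : ℝ) * lam k) ≤ 1}.Infinite

/-- `M(σ) = ∫₀^σ m(s) ds`. -/
noncomputable def Mfun (m : ℝ → ℝ) (σ : ℝ) : ℝ := ∫ s in (0:ℝ)..σ, m s

/-- The conserved quantity `H₀ = Σ_i b_i² + M(Σ_i λ_i² a_i²)`. -/
noncomputable def H0 (lam : ℕ → ℝ) (m : ℝ → ℝ) (a b : ℕ → ℝ) : ℝ :=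
  (∑' i, (b i) ^ 2) + Mfun m (∑' i, (lam i) ^ 2 * (a i) ^ 2)

/-- Galerkin approximation of order `n` (components of index `> n` extended by zero):
the solution of `v_i'' + m(Σ_{j≤n} λ_j² v_j²) λ_i² v_i = 0` for `i ≤ n`, with
`v_i(0) = a_i`, `v_i'(0) = b_i`. -/
def GalerkinSol (lam : ℕ → ℝ) (m : ℝ → ℝ) (a b : ℕ → ℝ) (n : ℕ)
    (v : ℕ → ℝ → ℝ) : Prop :=
  (∀ i, ContDiffOn ℝ 2 (v i) (Set.Ici 0)) ∧
  (∀ i ≤ n, v i 0 = a i) ∧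
  (∀ i ≤ n, derIci (v i) 0 = b i) ∧
  (∀ i, n < i → ∀ t, v i t = 0) ∧
  (∀ i ≤ n, ∀ t, 0 ≤ t →
    derIci (derIci (v i)) t
      + m (∑ j ∈ Finset.range (n + 1), (lam j) ^ 2 * (v j t) ^ 2)
        * (lam i) ^ 2 * v i t = 0)

/-- Global weak solution with initial data `(a,b)`: a family `v_i ∈ C²([0,∞))` with
`v_i(0) = a_i`, `v_i'(0) = b_i`, such that `Σ v_i'(t)²` and `Σ λ_i² v_i(t)²` converge,
the maps `t ↦ (v_i'(t))_i` and `t ↦ (λ_i v_i(t))_i` are continuous from `[0,∞)` into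
`ℓ²`, and `v_i'' + m(Σ_j λ_j² v_j²) λ_i² v_i = 0` for every `i` and every `t ≥ 0`. -/
def WeakSol (lam : ℕ → ℝ) (m : ℝ → ℝ) (a b : ℕ → ℝ) (v : ℕ → ℝ → ℝ) : Prop :=
  (∀ i, ContDiffOn ℝ 2 (v i) (Set.Ici 0)) ∧
  (∀ i, v i 0 = a i) ∧
  (∀ i, derIci (v i) 0 = b i) ∧
  (∀ t, 0 ≤ t → Summable fun i => (derIci (v i) t) ^ 2) ∧
  (∀ t, 0 ≤ t → Summable fun i => (lam i) ^ 2 * (v i t) ^ 2) ∧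
  (∀ t₀, 0 ≤ t₀ → Tendsto (fun t => ∑' i, (derIci (v i) t - derIci (v i) t₀) ^ 2)
      (nhdsWithin t₀ (Set.Ici 0)) (nhds 0)) ∧
  (∀ t₀, 0 ≤ t₀ → Tendsto (fun t => ∑' i, (lam i) ^ 2 * (v i t - v i t₀) ^ 2)
      (nhdsWithin t₀ (Set.Ici 0)) (nhds 0)) ∧
  (∀ i, ∀ t, 0 ≤ t →
    derIci (derIci (v i)) t
      + m (∑' j, (lam j) ^ 2 * (v j t) ^ 2) * (lam i) ^ 2 * v i t = 0)

/-!
Energy conservation for the Galerkin system gives `ν (φ + Σ_{i ≤ k} v_i'²) ≤ H₀` with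
`ν = min 1 μ₁`, and `M(φ + ρ) - M(φ) ≥ μ₁ ρ` gives `ν ρ ≤ F`. Along the equations of the high
modes, `F' = (m(φ + ρ) - m(φ)) φ'`. The Lipschitz bound `|m(φ + ρ) - m(φ)| ≤ L ρ` and the AM-GM
estimate `|φ'| ≤ λ_k (φ + Σ_{i ≤ k} v_i'²)` (using `λ_i ≤ λ_k` for `i ≤ k`) then give
`|F'| ≤ (L H₀ λ_k / ν²) F`, and Grönwall's inequality concludes.
-/

open MeasureTheory intervalIntegral

section Mfun

variable {m : ℝ → ℝ}

lemma intervalIntegrable_of_continuousOn_Ici (hm : ContinuousOn m (Ici 0)) {x y : ℝ}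
    (hx : 0 ≤ x) (hy : 0 ≤ y) : IntervalIntegrable m volume x y :=
  (hm.mono fun _ hz => le_trans (le_min hx hy) hz.1).intervalIntegrable

lemma Mfun_zero : Mfun m 0 = 0 := integral_same

lemma hasDerivWithinAt_Mfun (hm : ContinuousOn m (Ici 0)) {σ : ℝ} (hσ : 0 ≤ σ) :
    HasDerivWithinAt (Mfun m) (m σ) (Ici 0) σ := by
  have hint := intervalIntegrable_of_continuousOn_Ici hm le_rfl hσ
  have hmeas : AEStronglyMeasurable m (volume.restrict (Ici (0:ℝ))) :=
    hm.aestronglyMeasurable measurableSet_Ici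
  rcases hσ.eq_or_lt with rfl | hσ
  · exact integral_hasDerivWithinAt_right (t := Ioi 0) hint
      (AEStronglyMeasurable.stronglyMeasurableAtFilter_of_mem hmeas
        (mem_of_superset self_mem_nhdsWithin Ioi_subset_Ici_self))
      ((hm.continuousWithinAt self_mem_Ici).mono Ioi_subset_Ici_self)
  · exact (integral_hasDerivAt_right hint
      (AEStronglyMeasurable.stronglyMeasurableAtFilter_of_mem hmeas (Ici_mem_nhds hσ))
      (hm.continuousAt (Ici_mem_nhds hσ))).hasDerivWithinAt

lemma mul_sub_le_Mfun_sub (hm : ContinuousOn m (Ici 0)) {c σ₁ σ₂ : ℝ}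
    (hc : ∀ σ, 0 ≤ σ → c ≤ m σ) (h₁ : 0 ≤ σ₁) (h₁₂ : σ₁ ≤ σ₂) :
    c * (σ₂ - σ₁) ≤ Mfun m σ₂ - Mfun m σ₁ := by
  have h₂ : 0 ≤ σ₂ := h₁.trans h₁₂
  calc c * (σ₂ - σ₁) = ∫ _ in σ₁..σ₂, c := by simp [mul_comm]
    _ ≤ ∫ s in σ₁..σ₂, m s :=
      integral_mono_on h₁₂ intervalIntegrable_const
        (intervalIntegrable_of_continuousOn_Ici hm h₁ h₂) fun s hs => hc s (h₁.trans hs.1)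
    _ = Mfun m σ₂ - Mfun m σ₁ :=
      (integral_interval_sub_left (intervalIntegrable_of_continuousOn_Ici hm le_rfl h₂)
        (intervalIntegrable_of_continuousOn_Ici hm le_rfl h₁)).symm

end Mfun

lemma le_mul_exp_of_abs_deriv_le_mul {F F' : ℝ → ℝ} {K : ℝ}
    (hF : ∀ s, 0 ≤ s → HasDerivWithinAt F (F' s) (Ici 0) s)
    (hF_nonneg : ∀ s, 0 ≤ s → 0 ≤ F s) (hF' : ∀ s, 0 ≤ s → |F' s| ≤ K * F s)
    {t : ℝ} (ht : 0 ≤ t) : F t ≤ F 0 * Real.exp (K * t) := by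
  have h := norm_le_gronwallBound_of_norm_deriv_right_le (f := F) (ε := 0)
    (fun s hs => (hF s hs.1).continuousWithinAt.mono Icc_subset_Ici_self)
    (fun s hs => (hF s hs.1).mono (Ici_subset_Ici.mpr hs.1))
    (le_refl ‖F 0‖)
    (fun s hs => by
      simpa [Real.norm_eq_abs, abs_of_nonneg (hF_nonneg s hs.1)] using hF' s hs.1)
    t (right_mem_Icc.mpr ht)
  simpa [gronwallBound_ε0, Real.norm_eq_abs, abs_of_nonneg (hF_nonneg t ht),
    abs_of_nonneg (hF_nonneg 0 le_rfl)] using h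

open Finset

lemma sum_range_succ_eq_add_sum_Icc {M : Type*} [AddCommMonoid M] (f : ℕ → M) {k n : ℕ}
    (hkn : k ≤ n) :
    ∑ i ∈ range (n + 1), f i = ∑ i ∈ range (k + 1), f i + ∑ i ∈ Icc (k + 1) n, f i := by
  rw [← Finset.Ico_add_one_right_eq_Icc, sum_range_add_sum_Ico f (by omega)]

lemma abs_two_mul_sq_mul_le {l x y : ℝ} (hl : 0 ≤ l) :
    |2 * l ^ 2 * (x * y)| ≤ l * (l ^ 2 * x ^ 2 + y ^ 2) := by
  rw [abs_le]
  constructor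
  · nlinarith [mul_nonneg hl (sq_nonneg (l * x + y))]
  · nlinarith [mul_nonneg hl (sq_nonneg (l * x - y))]

lemma hasDerivWithinAt_derIci {f : ℝ → ℝ} (hf : ContDiffOn ℝ 1 f (Ici 0)) {t : ℝ}
    (ht : 0 ≤ t) : HasDerivWithinAt f (derIci f t) (Ici 0) t :=
  ((hf.differentiableOn one_ne_zero) t ht).hasDerivWithinAt

lemma contDiffOn_derIci {f : ℝ → ℝ} (hf : ContDiffOn ℝ 2 f (Ici 0)) :
    ContDiffOn ℝ 1 (derIci f) (Ici 0) :=
  hf.derivWithin (uniqueDiffOn_Ici 0) (by norm_num)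

section Energies

variable {lam : ℕ → ℝ} {m : ℝ → ℝ} {v : ℕ → ℝ → ℝ} {s : Finset ℕ} {k n : ℕ} {t : ℝ}

def potential (lam : ℕ → ℝ) (v : ℕ → ℝ → ℝ) (s : Finset ℕ) (t : ℝ) : ℝ :=
  ∑ i ∈ s, lam i ^ 2 * v i t ^ 2

noncomputable def kinetic (v : ℕ → ℝ → ℝ) (s : Finset ℕ) (t : ℝ) : ℝ :=
  ∑ i ∈ s, derIci (v i) t ^ 2

noncomputable def potentialDeriv (lam : ℕ → ℝ) (v : ℕ → ℝ → ℝ) (s : Finset ℕ) (t : ℝ) : ℝ :=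
  ∑ i ∈ s, 2 * lam i ^ 2 * (v i t * derIci (v i) t)

/-- The modified high-frequency energy `F` of the statement, with `φ` and `ρ` the potentials
of the modes `i ≤ k` and `k < i ≤ n`. -/
noncomputable def highEnergy (lam : ℕ → ℝ) (m : ℝ → ℝ) (v : ℕ → ℝ → ℝ) (k n : ℕ) (t : ℝ) :
    ℝ :=
  kinetic v (Icc (k + 1) n) t
    + Mfun m (potential lam v (range (k + 1)) t + potential lam v (Icc (k + 1) n) t)
    - Mfun m (potential lam v (range (k + 1)) t)

lemma potential_nonneg : 0 ≤ potential lam v s t :=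
  sum_nonneg fun _ _ => by positivity

lemma kinetic_nonneg : 0 ≤ kinetic v s t :=
  sum_nonneg fun _ _ => sq_nonneg _

lemma potential_range_eq_add (hkn : k ≤ n) :
    potential lam v (range (n + 1)) t
      = potential lam v (range (k + 1)) t + potential lam v (Icc (k + 1) n) t :=
  sum_range_succ_eq_add_sum_Icc _ hkn

lemma kinetic_range_eq_add (hkn : k ≤ n) :
    kinetic v (range (n + 1)) t = kinetic v (range (k + 1)) t + kinetic v (Icc (k + 1) n) t :=
  sum_range_succ_eq_add_sum_Icc _ hkn

lemma hasDerivWithinAt_potential (hv : ∀ i, ContDiffOn ℝ 1 (v i) (Ici 0)) (ht : 0 ≤ t) :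
    HasDerivWithinAt (potential lam v s) (potentialDeriv lam v s t) (Ici 0) t := by
  refine HasDerivWithinAt.fun_sum fun i _ => ?_
  refine (((hasDerivWithinAt_derIci (hv i) ht).fun_pow 2).const_mul (lam i ^ 2)).congr_deriv ?_
  push_cast
  ring

lemma hasDerivWithinAt_kinetic (hv : ∀ i, ContDiffOn ℝ 2 (v i) (Ici 0)) (ht : 0 ≤ t) :
    HasDerivWithinAt (kinetic v s)
      (∑ i ∈ s, 2 * (derIci (v i) t * derIci (derIci (v i)) t)) (Ici 0) t := by
  refine HasDerivWithinAt.fun_sum fun i _ => ?_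
  refine ((hasDerivWithinAt_derIci (contDiffOn_derIci (hv i)) ht).fun_pow 2).congr_deriv ?_
  push_cast
  ring

lemma abs_potentialDeriv_range_le (hlam : ∀ i, 0 ≤ lam i) (hmono : Monotone lam) :
    |potentialDeriv lam v (range (k + 1)) t|
      ≤ lam k * (potential lam v (range (k + 1)) t + kinetic v (range (k + 1)) t) := by
  calc |potentialDeriv lam v (range (k + 1)) t|
      ≤ ∑ i ∈ range (k + 1), |2 * lam i ^ 2 * (v i t * derIci (v i) t)| :=
        abs_sum_le_sum_abs _ _
    _ ≤ ∑ i ∈ range (k + 1), lam k * (lam i ^ 2 * v i t ^ 2 + derIci (v i) t ^ 2) :=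
        sum_le_sum fun i hi => (abs_two_mul_sq_mul_le (hlam i)).trans <|
          mul_le_mul_of_nonneg_right (hmono (mem_range_succ_iff.mp hi)) (by positivity)
    _ = _ := by rw [potential, kinetic, ← sum_add_distrib, mul_sum]

lemma mul_potential_le_highEnergy {μ : ℝ} (hm : ContinuousOn m (Ici 0))
    (hm_lb : ∀ σ, 0 ≤ σ → μ ≤ m σ) :
    μ * potential lam v (Icc (k + 1) n) t ≤ highEnergy lam m v k n t := by
  have h := mul_sub_le_Mfun_sub hm hm_lb (potential_nonneg (lam := lam) (v := v)
    (s := range (k + 1)) (t := t)) (le_add_of_nonneg_right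
      (potential_nonneg (lam := lam) (v := v) (s := Icc (k + 1) n) (t := t)))
  rw [add_sub_cancel_left] at h
  unfold highEnergy
  linarith [kinetic_nonneg (v := v) (s := Icc (k + 1) n) (t := t)]

lemma highEnergy_nonneg (hm : ContinuousOn m (Ici 0)) (hm_nonneg : ∀ σ, 0 ≤ σ → 0 ≤ m σ) :
    0 ≤ highEnergy lam m v k n t := by
  simpa using mul_potential_le_highEnergy hm hm_nonneg

end Energies

namespace GalerkinSol

variable {lam : ℕ → ℝ} {m : ℝ → ℝ} {a b : ℕ → ℝ} {v : ℕ → ℝ → ℝ} {k n : ℕ} {t : ℝ}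

lemma derIci_derIci_eq (hv : GalerkinSol lam m a b n v) {i : ℕ} (hi : i ≤ n) (ht : 0 ≤ t) :
    derIci (derIci (v i)) t = -(m (potential lam v (range (n + 1)) t) * lam i ^ 2 * v i t) :=
  eq_neg_of_add_eq_zero_left (hv.2.2.2.2 i hi t ht)

lemma energy_eq (hv : GalerkinSol lam m a b n v) (hm : ContinuousOn m (Ici 0)) (ht : 0 ≤ t) :
    kinetic v (range (n + 1)) t + Mfun m (potential lam v (range (n + 1)) t)
      = kinetic v (range (n + 1)) 0 + Mfun m (potential lam v (range (n + 1)) 0) := by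
  have hE : ∀ s, 0 ≤ s → HasDerivWithinAt
      (fun u => kinetic v (range (n + 1)) u + Mfun m (potential lam v (range (n + 1)) u))
      0 (Ici 0) s := by
    intro s hs
    have h := (hasDerivWithinAt_kinetic (s := range (n + 1)) hv.1 hs).add
      ((hasDerivWithinAt_Mfun hm potential_nonneg).comp s
        (hasDerivWithinAt_potential (lam := lam) (s := range (n + 1))
          (fun i => (hv.1 i).of_le one_le_two) hs)
        fun _ _ => potential_nonneg)
    refine h.congr_deriv ?_
    rw [potentialDeriv, mul_sum, ← sum_add_distrib]
    refine sum_eq_zero fun i hi => ?_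
    rw [hv.derIci_derIci_eq (mem_range_succ_iff.mp hi) hs]
    ring
  exact constant_of_has_deriv_right_zero
    (fun s hs => (hE s hs.1).continuousWithinAt.mono Icc_subset_Ici_self)
    (fun s hs => (hE s hs.1).mono (Ici_subset_Ici.mpr hs.1)) t (right_mem_Icc.mpr ht)

lemma energy_zero_le_H0 (hv : GalerkinSol lam m a b n v) (hab : InEnergy lam a b)
    (hm : ContinuousOn m (Ici 0)) (hm_nonneg : ∀ σ, 0 ≤ σ → 0 ≤ m σ) :
    kinetic v (range (n + 1)) 0 + Mfun m (potential lam v (range (n + 1)) 0) ≤ H0 lam m a b := by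
  have hb : Summable fun i => b i ^ 2 :=
    hab.of_nonneg_of_le (fun _ => sq_nonneg _) fun _ => le_add_of_nonneg_right (by positivity)
  have ha : Summable fun i => lam i ^ 2 * a i ^ 2 :=
    hab.of_nonneg_of_le (fun _ => by positivity) fun _ => le_add_of_nonneg_left (sq_nonneg _)
  have hkin : kinetic v (range (n + 1)) 0 ≤ ∑' i, b i ^ 2 := by
    rw [kinetic, sum_congr rfl fun i hi => by rw [hv.2.2.1 i (mem_range_succ_iff.mp hi)]]
    exact hb.sum_le_tsum _ fun _ _ => sq_nonneg _
  have hpot : potential lam v (range (n + 1)) 0 ≤ ∑' i, lam i ^ 2 * a i ^ 2 := by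
    rw [potential, sum_congr rfl fun i hi => by rw [hv.2.1 i (mem_range_succ_iff.mp hi)]]
    exact ha.sum_le_tsum _ fun _ _ => by positivity
  have hM := mul_sub_le_Mfun_sub hm hm_nonneg potential_nonneg hpot
  rw [zero_mul, sub_nonneg] at hM
  rw [H0]
  linarith

lemma hasDerivWithinAt_highEnergy (hv : GalerkinSol lam m a b n v) (hkn : k ≤ n)
    (hm : ContinuousOn m (Ici 0)) (ht : 0 ≤ t) :
    HasDerivWithinAt (highEnergy lam m v k n)
      ((m (potential lam v (range (k + 1)) t + potential lam v (Icc (k + 1) n) t)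
          - m (potential lam v (range (k + 1)) t))
        * potentialDeriv lam v (range (k + 1)) t) (Ici 0) t := by
  have hv₁ := fun i => (hv.1 i).of_le one_le_two
  have hφ := hasDerivWithinAt_potential (lam := lam) (s := range (k + 1)) hv₁ ht
  have hρ := hasDerivWithinAt_potential (lam := lam) (s := Icc (k + 1) n) hv₁ ht
  have h := ((hasDerivWithinAt_kinetic (s := Icc (k + 1) n) hv.1 ht).add
    ((hasDerivWithinAt_Mfun hm (add_nonneg potential_nonneg potential_nonneg)).comp t
      (hφ.add hρ) fun _ _ => add_nonneg potential_nonneg potential_nonneg)).sub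
    ((hasDerivWithinAt_Mfun hm potential_nonneg).comp t hφ fun _ _ => potential_nonneg)
  refine h.congr_deriv ?_
  have hode : ∀ i ∈ Finset.Icc (k + 1) n, 2 * (derIci (v i) t * derIci (derIci (v i)) t)
      = -(m (potential lam v (range (k + 1)) t + potential lam v (Icc (k + 1) n) t)
          * (2 * lam i ^ 2 * (v i t * derIci (v i) t))) := fun i hi => by
    rw [hv.derIci_derIci_eq (Finset.mem_Icc.mp hi).2 ht, potential_range_eq_add hkn]
    ring
  rw [sum_congr rfl hode, sum_neg_distrib, ← mul_sum]
  simp only [potentialDeriv]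
  ring

lemma min_mul_le_H0 (hv : GalerkinSol lam m a b n v) (hab : InEnergy lam a b) (hkn : k ≤ n)
    {μ : ℝ} (hμ : 0 ≤ μ) (hm : ContinuousOn m (Ici 0)) (hm_lb : ∀ σ, 0 ≤ σ → μ ≤ m σ)
    (ht : 0 ≤ t) :
    min 1 μ * (potential lam v (range (k + 1)) t + kinetic v (range (k + 1)) t)
      ≤ H0 lam m a b := by
  have hm_nonneg σ (hσ : 0 ≤ σ) : 0 ≤ m σ := hμ.trans (hm_lb σ hσ)
  have hE := (hv.energy_eq hm ht).trans_le (hv.energy_zero_le_H0 hab hm hm_nonneg)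
  have hM := mul_sub_le_Mfun_sub hm hm_lb le_rfl (potential_nonneg (lam := lam) (v := v)
    (s := range (n + 1)) (t := t))
  rw [Mfun_zero, sub_zero, sub_zero] at hM
  have hK : kinetic v (range (k + 1)) t ≤ kinetic v (range (n + 1)) t := by
    rw [kinetic_range_eq_add hkn]
    exact le_add_of_nonneg_right kinetic_nonneg
  have hP : potential lam v (range (k + 1)) t ≤ potential lam v (range (n + 1)) t := by
    rw [potential_range_eq_add hkn]
    exact le_add_of_nonneg_right potential_nonneg
  have hνφ : min 1 μ * potential lam v (range (k + 1)) t ≤ μ * potential lam v (range (k + 1)) t :=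
    mul_le_mul_of_nonneg_right (min_le_right _ _) potential_nonneg
  have hνK : min 1 μ * kinetic v (range (k + 1)) t ≤ kinetic v (range (k + 1)) t :=
    mul_le_of_le_one_left kinetic_nonneg (min_le_left _ _)
  nlinarith [mul_le_mul_of_nonneg_left hP hμ]

end GalerkinSol

lemma GalerkinSol.abs_deriv_highEnergy_le {lam : ℕ → ℝ} {m : ℝ → ℝ} {a b : ℕ → ℝ}
    {v : ℕ → ℝ → ℝ} {k n : ℕ} {μ L t : ℝ} (hv : GalerkinSol lam m a b n v)
    (hab : InEnergy lam a b) (hkn : k ≤ n) (hlam : ∀ i, 0 ≤ lam i) (hmono : Monotone lam)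
    (hμ : 0 < μ) (hL : 0 ≤ L) (hm : ContinuousOn m (Ici 0)) (hm_lb : ∀ σ, 0 ≤ σ → μ ≤ m σ)
    (hm_lip : ∀ σ₁ σ₂, 0 ≤ σ₁ → 0 ≤ σ₂ → |m σ₂ - m σ₁| ≤ L * |σ₂ - σ₁|) (ht : 0 ≤ t) :
    |(m (potential lam v (range (k + 1)) t + potential lam v (Icc (k + 1) n) t)
        - m (potential lam v (range (k + 1)) t)) * potentialDeriv lam v (range (k + 1)) t|
      ≤ L * H0 lam m a b * lam k / min 1 μ ^ 2 * highEnergy lam m v k n t := by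
  set φ := potential lam v (range (k + 1)) t
  set ρ := potential lam v (Icc (k + 1) n) t
  set X := φ + kinetic v (range (k + 1)) t
  set ν := min 1 μ
  have hν : 0 < ν := lt_min one_pos hμ
  have hρ : 0 ≤ ρ := potential_nonneg
  have hlip : |m (φ + ρ) - m φ| ≤ L * ρ := by
    have h := hm_lip φ (φ + ρ) potential_nonneg (add_nonneg potential_nonneg hρ)
    rwa [add_sub_cancel_left, abs_of_nonneg hρ] at h
  have hρF : ν * ρ ≤ highEnergy lam m v k n t :=
    (mul_le_mul_of_nonneg_right (min_le_right _ _) potential_nonneg).trans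
      (mul_potential_le_highEnergy hm hm_lb)
  have hXH : ν * X ≤ H0 lam m a b := hv.min_mul_le_H0 hab hkn hμ.le hm hm_lb ht
  have hF : 0 ≤ highEnergy lam m v k n t :=
    highEnergy_nonneg hm fun σ hσ => hμ.le.trans (hm_lb σ hσ)
  have hX : 0 ≤ X := add_nonneg potential_nonneg kinetic_nonneg
  calc |(m (φ + ρ) - m φ) * potentialDeriv lam v (range (k + 1)) t|
      = |m (φ + ρ) - m φ| * |potentialDeriv lam v (range (k + 1)) t| := abs_mul _ _
    _ ≤ (L * ρ) * (lam k * X) :=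
        mul_le_mul hlip (abs_potentialDeriv_range_le hlam hmono) (abs_nonneg _)
          (mul_nonneg hL hρ)
    _ = L * lam k / ν ^ 2 * ((ν * ρ) * (ν * X)) := by field_simp
    _ ≤ L * lam k / ν ^ 2 * (highEnergy lam m v k n t * H0 lam m a b) :=
        mul_le_mul_of_nonneg_left (mul_le_mul hρF hXH (mul_nonneg hν.le hX) hF)
          (div_nonneg (mul_nonneg hL (hlam k)) (sq_nonneg ν))
    _ = L * H0 lam m a b * lam k / ν ^ 2 * highEnergy lam m v k n t := by ring

theorem stmt9_general (lam : ℕ → ℝ) (hpos : ∀ i, 0 < lam i) (hmono : Monotone lam)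
    (μ₁ L : ℝ) (hμ₁ : 0 < μ₁) (hL : 0 < L) (m : ℝ → ℝ)
    (hm_lb : ∀ σ, 0 ≤ σ → μ₁ ≤ m σ)
    (hm_lip : ∀ σ₁ σ₂, 0 ≤ σ₁ → 0 ≤ σ₂ → |m σ₂ - m σ₁| ≤ L * |σ₂ - σ₁|)
    (a b : ℕ → ℝ) (hab : InEnergy lam a b)
    (k n : ℕ) (hkn : k < n)
    (v : ℕ → ℝ → ℝ) (hv : GalerkinSol lam m a b n v)
    (φ ρ F : ℝ → ℝ)
    (hφ : ∀ t, φ t = ∑ i ∈ Finset.range (k + 1), (lam i) ^ 2 * (v i t) ^ 2)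
    (hρ : ∀ t, ρ t = ∑ i ∈ Finset.Icc (k + 1) n, (lam i) ^ 2 * (v i t) ^ 2)
    (hF : ∀ t, F t = (∑ i ∈ Finset.Icc (k + 1) n, (derIci (v i) t) ^ 2)
      + Mfun m (φ t + ρ t) - Mfun m (φ t)) :
    ∀ t, 0 ≤ t →
      F t ≤ F 0 * Real.exp (L * H0 lam m a b * lam k * t / (min 1 μ₁) ^ 2) := by
  intro t ht
  obtain rfl : φ = potential lam v (range (k + 1)) := funext hφ
  obtain rfl : ρ = potential lam v (Icc (k + 1) n) := funext hρ
  obtain rfl : F = highEnergy lam m v k n := funext hF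
  have hm : ContinuousOn m (Ici 0) :=
    (LipschitzOnWith.of_dist_le_mul (K := ⟨L, hL.le⟩) fun x hx y hy => by
      rw [Real.dist_eq, Real.dist_eq]
      exact hm_lip y x hy hx).continuousOn
  calc highEnergy lam m v k n t
      ≤ highEnergy lam m v k n 0 * Real.exp (L * H0 lam m a b * lam k / min 1 μ₁ ^ 2 * t) :=
        le_mul_exp_of_abs_deriv_le_mul (fun s hs => hv.hasDerivWithinAt_highEnergy hkn.le hm hs)
          (fun _ _ => highEnergy_nonneg hm fun σ hσ => hμ₁.le.trans (hm_lb σ hσ))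
          (fun s hs => hv.abs_deriv_highEnergy_le hab hkn.le (fun i => (hpos i).le) hmono hμ₁
            hL.le hm hm_lb hm_lip hs) ht
    _ = _ := by ring_nf

/-- exponential growth estimate for the modified high-frequency energy F. -/
theorem stmt9 (lam : ℕ → ℝ) (hpos : ∀ i, 0 < lam i) (hmono : Monotone lam)
    (htop : Tendsto lam atTop atTop)
    (μ₁ μ₂ L : ℝ) (hμ₁ : 0 < μ₁) (hL : 0 < L) (m : ℝ → ℝ)
    (hm_reg : ContDiffOn ℝ 1 m (Set.Ici 0))
    (hm_lb : ∀ σ, 0 ≤ σ → μ₁ ≤ m σ) (hm_ub : ∀ σ, 0 ≤ σ → m σ ≤ μ₂)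
    (hm_lip : ∀ σ₁ σ₂, 0 ≤ σ₁ → 0 ≤ σ₂ → |m σ₂ - m σ₁| ≤ L * |σ₂ - σ₁|)
    (a b : ℕ → ℝ) (hab : InEnergy lam a b)
    (k n : ℕ) (hk : 0 < k) (hkn : k < n)
    (v : ℕ → ℝ → ℝ) (hv : GalerkinSol lam m a b n v)
    (φ ρ F : ℝ → ℝ)
    (hφ : ∀ t, φ t = ∑ i ∈ Finset.range (k + 1), (lam i) ^ 2 * (v i t) ^ 2)
    (hρ : ∀ t, ρ t = ∑ i ∈ Finset.Icc (k + 1) n, (lam i) ^ 2 * (v i t) ^ 2)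
    (hF : ∀ t, F t = (∑ i ∈ Finset.Icc (k + 1) n, (derIci (v i) t) ^ 2)
      + Mfun m (φ t + ρ t) - Mfun m (φ t)) :
    ∀ t, 0 ≤ t →
      F t ≤ F 0 * Real.exp (L * H0 lam m a b * lam k * t / (min 1 μ₁) ^ 2) :=
  stmt9_general lam hpos hmono μ₁ L hμ₁ hL m hm_lb hm_lip a b hab k n hkn v hv φ ρ F hφ hρ hF
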